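/- With θ_r := ∫_{−1}^{1} √(1−t²) P_{2r}(t) dt, one has θ₀ = π/2, θ₁ = −π/16, θ₂ = −π/128, and θ_r > θ₂ (i.e. θ_r > −π/128) for all r > 2. -/

import Mathlib

open Polynomial Real

/-- The `n`-th Legendre polynomial (Rodrigues' formula), normalized so that `P n 1 = 1`. -/
noncomputable def legendre (n : ℕ) : Polynomial ℝ :=
  (((2 : ℝ) ^ n * n.factorial)⁻¹) • (derivative^[n] ((X ^ 2 - 1) ^ n))

/-- `θ r = ∫_{−1}^{1} √(1−t²) P_{2r}(t) dt`. -/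
noncomputable def theta (r : ℕ) : ℝ :=
  ∫ t in (-1 : ℝ)..1, Real.sqrt (1 - t ^ 2) * (legendre (2 * r)).eval t

/-!
Write `I q = ∫_{-1}^{1} √(1 - t²) q(t) dt` and `Rₙ = Dⁿ (X² - 1)ⁿ = 2ⁿ n! Pₙ`. Integrating by
parts against `(1 - t²)^{3/2}`, whose derivative is `-3t √(1 - t²)`, gives
`I ((X² - 1) q') = -3 I (X q)`. Fed into the Legendre identities
`R_{n+2} = 2(n+2) X R_{n+1} + 2 (X² - 1) R'_{n+1}` and
`(X² - 1) R'_{n+2} = (n+2) X R_{n+2} - 2(n+2)² R_{n+1}`, this yields the two-step recurrence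
`(n+3)(n+5) I(P_{n+3}) = n(n+2) I(P_{n+1})`, i.e. `4(r+2)(r+3) θ_{r+2} = (2r+1)(2r+3) θ_{r+1}`.
The ratio lies in `(0, 1)`, so starting from `θ₁ < 0` the sequence `θ₁, θ₂, …` is negative and
strictly increasing.
-/

namespace Polynomial

theorem iterate_derivative_succ_X_mul {R : Type*} [CommSemiring R] (n : ℕ) (p : R[X]) :
    derivative^[n + 1] (X * p) = X * derivative^[n + 1] p + (n + 1) • derivative^[n] p := by
  rw [mul_comm, iterate_derivative_mul_X, Nat.add_sub_cancel, mul_comm]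

variable {R : Type*} [CommRing R]

theorem iterate_derivative_succ_X_sq_sub_one_mul_derivative (n : ℕ) (p : R[X]) :
    derivative^[n + 1] ((X ^ 2 - 1) * derivative p) =
      (X ^ 2 - 1) * derivative^[n + 2] p + (2 * (n + 1)) • (X * derivative^[n + 1] p) +
        ((n + 1) * n) • derivative^[n] p := by
  rw [show (X ^ 2 - 1) * derivative p = derivative p * X * X - derivative p by ring,
    iterate_derivative_sub, iterate_derivative_mul_X, Nat.add_sub_cancel,
    iterate_derivative_derivative_mul_X, iterate_derivative_derivative_mul_X,
    ← Function.iterate_succ_apply]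
  ring

theorem derivative_X_sq_sub_one_pow_succ (n : ℕ) :
    derivative ((X ^ 2 - 1 : R[X]) ^ (n + 1)) = (2 * (n + 1)) • (X * (X ^ 2 - 1) ^ n) := by
  rw [derivative_pow_succ, derivative_sub, derivative_X_sq, derivative_one, C_ofNat, map_add,
    map_natCast, map_one]
  ring

theorem X_sq_sub_one_mul_iterate_derivative_X_sq_sub_one_pow (n : ℕ) :
    (X ^ 2 - 1) * derivative^[n + 2] ((X ^ 2 - 1 : R[X]) ^ (n + 1)) =
      ((n + 1) * (n + 2)) • derivative^[n] ((X ^ 2 - 1 : R[X]) ^ (n + 1)) := by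
  set W : R[X] := (X ^ 2 - 1) ^ (n + 1)
  have hW : (X ^ 2 - 1) * derivative W = (2 * (n + 1)) • (X * W) := by
    rw [derivative_X_sq_sub_one_pow_succ]
    ring
  have h := congrArg (derivative^[n + 1]) hW
  rw [iterate_derivative_succ_X_sq_sub_one_mul_derivative, iterate_derivative_smul,
    iterate_derivative_succ_X_mul] at h
  linear_combination h

noncomputable def rodrigues (n : ℕ) : R[X] :=
  derivative^[n] ((X ^ 2 - 1) ^ n)

theorem rodrigues_one : rodrigues 1 = (2 • X : R[X]) := by
  rw [rodrigues, Function.iterate_one, pow_one, derivative_sub, derivative_X_sq, derivative_one,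
    sub_zero, C_ofNat, nsmul_eq_mul, Nat.cast_ofNat]

theorem derivative_rodrigues_succ (n : ℕ) :
    derivative (rodrigues (n + 1) : R[X]) =
      (2 * (n + 1)) • (X * derivative (rodrigues n) + (n + 1) • rodrigues n) := by
  rw [rodrigues, rodrigues, ← Function.iterate_succ_apply' derivative,
    Function.iterate_succ_apply, derivative_X_sq_sub_one_pow_succ, iterate_derivative_smul,
    iterate_derivative_succ_X_mul, Function.iterate_succ_apply']

theorem rodrigues_add_two (n : ℕ) :
    (rodrigues (n + 2) : R[X]) =
      (2 * (n + 2)) • (X * rodrigues (n + 1)) +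
        2 • ((X ^ 2 - 1) * derivative (rodrigues (n + 1))) := by
  have h : (X ^ 2 - 1) * derivative^[n + 1 + 1] ((X ^ 2 - 1 : R[X]) ^ (n + 1)) = _ :=
    X_sq_sub_one_mul_iterate_derivative_X_sq_sub_one_pow n
  rw [rodrigues, rodrigues, Function.iterate_succ_apply, derivative_X_sq_sub_one_pow_succ,
    iterate_derivative_smul, iterate_derivative_succ_X_mul,
    ← Function.iterate_succ_apply' derivative, Nat.succ_eq_add_one]
  linear_combination -2 * h

theorem X_sq_sub_one_mul_derivative_rodrigues_add_two (n : ℕ) :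
    (X ^ 2 - 1) * derivative (rodrigues (n + 2) : R[X]) =
      (n + 2) • (X * rodrigues (n + 2)) - (2 * (n + 2) ^ 2) • rodrigues (n + 1) := by
  have hD : derivative (rodrigues (n + 2) : R[X]) = _ := derivative_rodrigues_succ (n + 1)
  have hA := rodrigues_add_two (R := R) n
  linear_combination (X ^ 2 - 1) * hD - ((n : R[X]) + 2) * X * hA

end Polynomial

noncomputable def semicircleIntegral : ℝ[X] →ₗ[ℝ] ℝ where
  toFun q := ∫ t in (-1 : ℝ)..1, √(1 - t ^ 2) * q.eval t
  map_add' p q := by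
    simp only [eval_add, mul_add]
    exact intervalIntegral.integral_add ((by fun_prop : Continuous _).intervalIntegrable _ _)
      ((by fun_prop : Continuous _).intervalIntegrable _ _)
  map_smul' c q := by
    simp only [eval_smul, smul_eq_mul, RingHom.id_apply, ← intervalIntegral.integral_const_mul]
    congr 1 with t
    ring

theorem semicircleIntegral_apply (q : ℝ[X]) :
    semicircleIntegral q = ∫ t in (-1 : ℝ)..1, √(1 - t ^ 2) * q.eval t := rfl

theorem semicircleIntegral_one : semicircleIntegral 1 = π / 2 := by
  simpa [semicircleIntegral_apply] using integral_sqrt_one_sub_sq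

theorem hasDerivAt_one_sub_sq_mul_sqrt {t : ℝ} (ht : t ∈ Set.Ioo (-1 : ℝ) 1) :
    HasDerivAt (fun t : ℝ => (1 - t ^ 2) * √(1 - t ^ 2)) (-3 * t * √(1 - t ^ 2)) t := by
  have hpos : 0 < 1 - t ^ 2 := by nlinarith [ht.1, ht.2]
  have hsq : HasDerivAt (fun t : ℝ => 1 - t ^ 2) (-(2 * t)) t := by
    simpa using (hasDerivAt_pow 2 t).const_sub 1
  refine (hsq.mul (hsq.sqrt hpos.ne')).congr_deriv ?_
  have hs : √(1 - t ^ 2) ≠ 0 := (Real.sqrt_pos.2 hpos).ne'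
  field_simp
  rw [Real.sq_sqrt hpos.le]
  ring

theorem semicircleIntegral_X_sq_sub_one_mul_derivative (q : ℝ[X]) :
    semicircleIntegral ((X ^ 2 - 1) * derivative q) = -3 * semicircleIntegral (X * q) := by
  have hparts := intervalIntegral.integral_mul_deriv_eq_deriv_mul_of_hasDerivAt
    (u := fun t : ℝ => (1 - t ^ 2) * √(1 - t ^ 2)) (v := fun t => q.eval t)
    (u' := fun t => -3 * t * √(1 - t ^ 2)) (v' := fun t => (derivative q).eval t)
    (a := -1) (b := 1) (by fun_prop) (by fun_prop)
    (fun t ht => hasDerivAt_one_sub_sq_mul_sqrt (by simpa using ht))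
    (fun t _ => q.hasDerivAt t) ((by fun_prop : Continuous _).intervalIntegrable _ _)
    ((by fun_prop : Continuous _).intervalIntegrable _ _)
  norm_num at hparts
  simp only [semicircleIntegral_apply, eval_mul, eval_sub, eval_pow, eval_X, eval_one]
  calc ∫ t in (-1 : ℝ)..1, √(1 - t ^ 2) * ((t ^ 2 - 1) * (derivative q).eval t)
      = -∫ t in (-1 : ℝ)..1, (1 - t ^ 2) * √(1 - t ^ 2) * (derivative q).eval t := by
        rw [← intervalIntegral.integral_neg]; congr 1 with t; ring
    _ = -3 * ∫ t in (-1 : ℝ)..1, √(1 - t ^ 2) * (t * q.eval t) := by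
        rw [hparts, ← intervalIntegral.integral_const_mul, ← intervalIntegral.integral_neg]
        congr 1 with t; ring

theorem semicircleIntegral_X_mul_X : semicircleIntegral (X * X) = π / 8 := by
  have h := semicircleIntegral_X_sq_sub_one_mul_derivative X
  rw [derivative_X, mul_one, map_sub, semicircleIntegral_one, sq] at h
  linarith

theorem semicircleIntegral_rodrigues_add_two (n : ℕ) :
    semicircleIntegral (rodrigues (n + 2)) =
      (2 * n - 2) * semicircleIntegral (X * rodrigues (n + 1)) := by
  rw [rodrigues_add_two, map_add, map_nsmul, map_nsmul,
    semicircleIntegral_X_sq_sub_one_mul_derivative, nsmul_eq_mul, nsmul_eq_mul]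
  push_cast
  ring

theorem add_five_mul_semicircleIntegral_X_mul_rodrigues (n : ℕ) :
    (n + 5) * semicircleIntegral (X * rodrigues (n + 2)) =
      2 * (n + 2) ^ 2 * semicircleIntegral (rodrigues (n + 1)) := by
  have h := congrArg semicircleIntegral (X_sq_sub_one_mul_derivative_rodrigues_add_two n)
  rw [semicircleIntegral_X_sq_sub_one_mul_derivative, map_sub, map_nsmul, map_nsmul,
    nsmul_eq_mul, nsmul_eq_mul] at h
  push_cast at h
  linarith

theorem semicircleIntegral_rodrigues_add_three (n : ℕ) :
    (n + 5) * semicircleIntegral (rodrigues (n + 3)) =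
      4 * n * (n + 2) ^ 2 * semicircleIntegral (rodrigues (n + 1)) := by
  rw [semicircleIntegral_rodrigues_add_two (n + 1)]
  push_cast
  linear_combination 2 * (n : ℝ) * add_five_mul_semicircleIntegral_X_mul_rodrigues n

theorem semicircleIntegral_legendre (n : ℕ) :
    semicircleIntegral (legendre n) =
      semicircleIntegral (rodrigues n) / (2 ^ n * n.factorial) := by
  rw [legendre, map_smul, smul_eq_mul, inv_mul_eq_div, rodrigues]

theorem semicircleIntegral_legendre_add_three (n : ℕ) :
    (n + 3) * (n + 5) * semicircleIntegral (legendre (n + 3)) =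
      n * (n + 2) * semicircleIntegral (legendre (n + 1)) := by
  rw [semicircleIntegral_legendre, semicircleIntegral_legendre, Nat.factorial_succ,
    Nat.factorial_succ (n + 1), pow_add _ (n + 1) 2]
  push_cast
  field_simp
  linear_combination (n + 3 : ℝ) * semicircleIntegral_rodrigues_add_three n

theorem theta_eq_semicircleIntegral (r : ℕ) : theta r = semicircleIntegral (legendre (2 * r)) :=
  rfl

theorem theta_zero : theta 0 = π / 2 := by
  simp [theta_eq_semicircleIntegral, legendre, semicircleIntegral_one]

theorem theta_one : theta 1 = -π / 16 := by
  rw [theta_eq_semicircleIntegral, semicircleIntegral_legendre,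
    semicircleIntegral_rodrigues_add_two 0, rodrigues_one, mul_smul_comm, map_nsmul, nsmul_eq_mul,
    semicircleIntegral_X_mul_X]
  simp only [Nat.factorial, Nat.cast_ofNat, CharP.cast_eq_zero]
  ring

theorem theta_add_two (r : ℕ) :
    4 * (r + 2) * (r + 3) * theta (r + 2) = (2 * r + 1) * (2 * r + 3) * theta (r + 1) := by
  have h := semicircleIntegral_legendre_add_three (2 * r + 1)
  rw [show 2 * r + 1 + 3 = 2 * (r + 2) by ring, show 2 * r + 1 + 1 = 2 * (r + 1) by ring,
    ← theta_eq_semicircleIntegral, ← theta_eq_semicircleIntegral] at h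
  push_cast at h
  linear_combination h

theorem theta_two : theta 2 = -π / 128 := by
  have h := theta_add_two 0
  rw [theta_one, Nat.cast_zero] at h
  linarith

theorem theta_succ_neg (r : ℕ) : theta (r + 1) < 0 := by
  induction r with
  | zero => rw [theta_one]; linarith [pi_pos]
  | succ r ih =>
    have hA : 0 ≤ (4 * (r + 2) * (r + 3) : ℝ) := by positivity
    have hB : 0 < ((2 * r + 1) * (2 * r + 3) : ℝ) := by positivity
    exact neg_of_mul_neg_right (theta_add_two r ▸ mul_neg_of_pos_of_neg hB ih) hA

theorem theta_succ_lt_theta_succ_succ (r : ℕ) : theta (r + 1) < theta (r + 2) := by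
  have hA : 0 < (4 * (r + 2) * (r + 3) : ℝ) := by positivity
  have hAB : 0 < (4 * (r + 2) * (r + 3) - (2 * r + 1) * (2 * r + 3) : ℝ) := by nlinarith
  have h : 0 < 4 * (r + 2) * (r + 3) * (theta (r + 2) - theta (r + 1)) := by
    nlinarith [theta_add_two r, mul_neg_of_pos_of_neg hAB (theta_succ_neg r)]
  exact sub_pos.1 (pos_of_mul_pos_right h hA.le)

theorem theta_values :
    theta 0 = π / 2 ∧ theta 1 = -π / 16 ∧ theta 2 = -π / 128 ∧
    ∀ r : ℕ, 2 < r → theta r > -π / 128 := by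
  refine ⟨theta_zero, theta_one, theta_two, fun r hr => ?_⟩
  obtain ⟨k, rfl⟩ : ∃ k, r = k + 1 := ⟨r - 1, by omega⟩
  rw [← theta_two]
  exact strictMono_nat_of_lt_succ theta_succ_lt_theta_succ_succ (show 1 < k by omega)
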